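/- arXiv:1506.05558 — 3 statements merged into one kernel-verified Lean document; each statement's English description precedes it below -/
import Mathlib

section
/- (Singleton bound for linear rank metric codes.) Let C be an 𝔽_q-linear subspace of the space M_{m×n}(q) of m×n matrices over 𝔽_q of dimension k, with minimum rank distance at least d, where 1 ≤ d ≤ min(m,n). Then k ≤ min{m(n−d+1), n(m−d+1)}. -/
/-!
A nonzero codeword vanishing on a set `t` of rows has rank at most the number of remaining rows.
So if `#t + d > m`, restricting codewords to the rows in `t` is injective on a code of minimum rank
distance `d`, and the dimension of the code is at most `#t · n`; with `#t = m - d + 1` this is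
`n (m - d + 1)`. Transposing gives the bound `m (n - d + 1)`.
-/

open Module

namespace Matrix

section Submatrix

variable {R l m n o : Type*} [Semiring R]

def submatrixLinearMap (r : l → m) (c : o → n) : Matrix m n R →ₗ[R] Matrix l o R where
  toFun A := A.submatrix r c
  map_add' _ _ := rfl
  map_smul' _ _ := rfl

end Submatrix

theorem rank_le_card_sub_of_submatrix_eq_zero {R m n : Type*} [CommSemiring R]
    [StrongRankCondition R] [Fintype m] [Fintype n] (A : Matrix m n R) (t : Finset m)
    (hA : A.submatrix ((↑) : t → m) id = 0) : A.rank ≤ Fintype.card m - t.card := by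
  classical
  have hsupp : Function.support A.row ⊆ ↑tᶜ := fun i hi => by
    by_contra hit
    exact hi (funext fun j => congrFun (congrFun hA ⟨i, by simpa using hit⟩) j)
  simpa [Finset.card_compl] using A.rank_le_card_of_support_subset tᶜ hsupp

variable {K m n : Type*} [Field K] [Fintype m] [Fintype n]
  {C : Submodule K (Matrix m n K)} {d : ℕ}

theorem finrank_le_card_mul_card_of_le_rank (hC : ∀ A ∈ C, A ≠ 0 → d ≤ A.rank) (t : Finset m)
    (ht : Fintype.card m - t.card < d) : finrank K C ≤ t.card * Fintype.card n := by
  let restrict := submatrixLinearMap (R := K) ((↑) : t → m) (id : n → n)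
  have hinj : Function.Injective (restrict ∘ₗ C.subtype) := by
    rw [← LinearMap.ker_eq_bot, LinearMap.ker_eq_bot']
    rintro ⟨A, hAC⟩ hA
    by_contra hA0
    have hrank := A.rank_le_card_sub_of_submatrix_eq_zero t hA
    have := hC A hAC (by simpa using hA0)
    omega
  simpa [finrank_matrix] using LinearMap.finrank_le_finrank_of_injective hinj

theorem finrank_le_card_sub_mul_card_of_le_rank (hC : ∀ A ∈ C, A ≠ 0 → d ≤ A.rank)
    (hd1 : 1 ≤ d) (hd : d ≤ Fintype.card m) :
    finrank K C ≤ (Fintype.card m - d + 1) * Fintype.card n := by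
  obtain ⟨t, -, ht⟩ := Finset.exists_subset_card_eq (s := (Finset.univ : Finset m))
    (n := Fintype.card m - d + 1) (by rw [Finset.card_univ]; omega)
  rw [← ht]
  exact finrank_le_card_mul_card_of_le_rank hC t (by omega)

theorem finrank_le_card_mul_card_sub_of_le_rank (hC : ∀ A ∈ C, A ≠ 0 → d ≤ A.rank)
    (hd1 : 1 ≤ d) (hd : d ≤ Fintype.card n) :
    finrank K C ≤ Fintype.card m * (Fintype.card n - d + 1) := by
  let e := transposeLinearEquiv m n K K
  have hCt : ∀ B ∈ C.map e.toLinearMap, B ≠ 0 → d ≤ B.rank := by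
    rintro _ ⟨A, hAC, rfl⟩ hA0
    simpa [e, rank_transpose] using hC A hAC (by simpa [e] using hA0)
  rw [← LinearEquiv.finrank_map_eq e C, mul_comm]
  exact finrank_le_card_sub_mul_card_of_le_rank hCt hd1 hd

end Matrix

theorem singleton_bound_linear_rank_metric_general
    (m n d k : ℕ) (K : Type*) [Field K]
    (hd1 : 1 ≤ d) (hd : d ≤ min m n)
    (C : Submodule K (Matrix (Fin m) (Fin n) K))
    (hk : Module.finrank K C = k)
    (hmin : ∀ A ∈ C, ∀ B ∈ C, A ≠ B → d ≤ (A - B).rank) :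
    k ≤ min (m * (n - d + 1)) (n * (m - d + 1)) := by
  have hC : ∀ A ∈ C, A ≠ 0 → d ≤ A.rank := fun A hA hA0 => by
    simpa using hmin A hA 0 C.zero_mem hA0
  subst hk
  refine le_min ?_ ?_
  · simpa using Matrix.finrank_le_card_mul_card_sub_of_le_rank hC hd1
      (by simpa using hd.trans (min_le_right _ _))
  · simpa [mul_comm n] using Matrix.finrank_le_card_sub_mul_card_of_le_rank hC hd1
      (by simpa using hd.trans (min_le_left _ _))

/-- Singleton bound for linear rank metric codes: if `C` is a `k`-dimensional
`𝔽_q`-linear subspace of `M_{m×n}(q)` with minimum rank distance at least `d`,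
`1 ≤ d ≤ min m n`, then `k ≤ min {m(n-d+1), n(m-d+1)}`. -/
theorem singleton_bound_linear_rank_metric
    (m n d k : ℕ) (K : Type*) [Field K] [Fintype K] [DecidableEq K]
    (hd1 : 1 ≤ d) (hd : d ≤ min m n)
    (C : Submodule K (Matrix (Fin m) (Fin n) K))
    (hk : Module.finrank K C = k)
    (hmin : ∀ A ∈ C, ∀ B ∈ C, A ≠ B → d ≤ (A - B).rank) :
    k ≤ min (m * (n - d + 1)) (n * (m - d + 1)) :=
  singleton_bound_linear_rank_metric_general m n d k K hd1 hd C hk hmin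
end

section
/- Let F be an a×b Ferrers diagram, let d ≥ 1, and fix an integer i with 0 ≤ i ≤ d−1. Let v_i be the number of dots of F that are not contained in the first i rows and not contained in the rightmost d−1−i columns (i.e., v_i = |{(r,c) ∈ F : r > i and c ≤ b−(d−1−i)}|). Let C be a set of a×b matrices over 𝔽_q all of whose entries in positions not in F are zero, such that rank(X−Y) ≥ d for all distinct X, Y ∈ C. Then the map sending each codeword to its restriction to the positions (r,c) ∈ F with r > i and c ≤ b−(d−1−i) is injective on C, and consequently |C| ≤ q^(v_i). -/
/-!
If two codewords agree on the punctured positions, their difference vanishes on the block of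
rows `≥ i` and columns `< b - (d - 1 - i)`. Splitting it into its first `i` rows and the rest
bounds its rank by `i + (d - 1 - i) = d - 1 < d`, so the two codewords coincide.
-/

open Finset

namespace Matrix

theorem rank_add_le {m n K : Type*} [Fintype n] [Field K] (A B : Matrix m n K) :
    (A + B).rank ≤ A.rank + B.rank := by
  unfold Matrix.rank
  rw [Matrix.mulVecLin_add]
  exact (Submodule.finrank_mono (LinearMap.range_add_le _ _)).trans
    (Submodule.finrank_add_le_finrank_add_finrank _ _)

theorem rank_diagonal_indicator {m K : Type*} [Fintype m] [DecidableEq m] [Field K]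
    (S : Finset m) : (diagonal (fun j => if j ∈ S then (1 : K) else 0)).rank = #S := by
  classical
  rw [rank_diagonal, Fintype.card_subtype]
  simp

theorem rank_le_card_add_card_of_eq_zero {m n K : Type*} [Fintype m] [Fintype n]
    [DecidableEq m] [DecidableEq n] [Field K] (M : Matrix m n K) (R : Finset m) (S : Finset n)
    (hM : ∀ r c, r ∉ R → c ∉ S → M r c = 0) : M.rank ≤ #R + #S := by
  set DR : Matrix m m K := diagonal fun r => if r ∈ R then 1 else 0
  set DS : Matrix n n K := diagonal fun c => if c ∈ S then 1 else 0
  -- `M - DR * M` keeps only the rows outside `R`, where `M` is supported on the columns `S`.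
  have hsplit : M = DR * M + (M - DR * M) * DS := by
    ext r c
    by_cases hr : r ∈ R <;> by_cases hc : c ∈ S <;> simp [DR, DS, hr, hc, hM]
  calc M.rank = (DR * M + (M - DR * M) * DS).rank := by rw [← hsplit]
    _ ≤ (DR * M).rank + ((M - DR * M) * DS).rank := rank_add_le _ _
    _ ≤ DR.rank + DS.rank := add_le_add (rank_mul_le_left _ _) (rank_mul_le_right _ _)
    _ = #R + #S := by rw [rank_diagonal_indicator, rank_diagonal_indicator]

theorem rank_le_add_of_lowerLeft_eq_zero {a b : ℕ} {K : Type*} [Field K]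
    (M : Matrix (Fin a) (Fin b) K) (i k : ℕ)
    (hM : ∀ (r : Fin a) (c : Fin b), i ≤ (r : ℕ) → (c : ℕ) < b - k → M r c = 0) :
    M.rank ≤ i + k := by
  have hR : #(univ.filter fun r : Fin a => (r : ℕ) < i) ≤ i := by
    simpa using card_le_card_of_injOn (fun r : Fin a => (r : ℕ)) (t := range i)
      (fun r hr => by simpa using hr) Fin.val_injective.injOn
  have hS : #(univ.filter fun c : Fin b => b - k ≤ (c : ℕ)) ≤ k := by
    simpa using card_le_card_of_injOn (fun c : Fin b => (c : ℕ) - (b - k)) (t := range k)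
      (fun c hc => by simp at hc ⊢; omega) (fun x hx y hy h => by simp at hx hy h; omega)
  refine (M.rank_le_card_add_card_of_eq_zero _ _ fun r c hr hc =>
    hM r c (by simpa using hr) (by simp at hc; omega)).trans (add_le_add hR hS)

end Matrix

theorem card_le_pow_of_injOn {β ι K : Type*} [Fintype ι] [Fintype K]
    (C : Finset β) (f : β → ι → K) (hf : Set.InjOn f C) :
    #C ≤ Fintype.card K ^ Fintype.card ι := by
  classical
  rw [← Fintype.card_fun, ← card_univ]
  exact card_le_card_of_injOn f (fun _ _ => mem_univ _) hf

theorem ferrers_diagram_puncturing_general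
    (q a b d i : ℕ) (K : Type*) [Field K] [Fintype K]
    (hq : Fintype.card K = q)
    (hd : 1 ≤ d) (hi : i ≤ d - 1)
    (F : Finset (Fin a × Fin b))
    (C : Finset (Matrix (Fin a) (Fin b) K))
    (hsupp : ∀ X ∈ C, ∀ (r : Fin a) (c : Fin b), (r, c) ∉ F → X r c = 0)
    (hmin : ∀ X ∈ C, ∀ Y ∈ C, X ≠ Y → d ≤ (X - Y).rank) :
    Set.InjOn (fun X : Matrix (Fin a) (Fin b) K =>
        fun p : {p : Fin a × Fin b //
            p ∈ F ∧ i ≤ (p.1 : ℕ) ∧ (p.2 : ℕ) < b - (d - 1 - i)} => X p.1.1 p.1.2)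
      (C : Set (Matrix (Fin a) (Fin b) K))
    ∧ C.card ≤
        q ^ (F.filter (fun p => i ≤ (p.1 : ℕ) ∧ (p.2 : ℕ) < b - (d - 1 - i))).card := by
  have hinj : Set.InjOn (fun X : Matrix (Fin a) (Fin b) K =>
        fun p : {p : Fin a × Fin b //
            p ∈ F ∧ i ≤ (p.1 : ℕ) ∧ (p.2 : ℕ) < b - (d - 1 - i)} => X p.1.1 p.1.2) C := by
    intro X hX Y hY hXY
    by_contra hne
    have hvanish : ∀ (r : Fin a) (c : Fin b), i ≤ (r : ℕ) → (c : ℕ) < b - (d - 1 - i) →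
        (X - Y) r c = 0 := fun r c hr hc => by
      by_cases hF : (r, c) ∈ F
      · exact sub_eq_zero.2 (congrFun hXY ⟨(r, c), hF, hr, hc⟩)
      · simp [hsupp X hX r c hF, hsupp Y hY r c hF]
    have hle := (X - Y).rank_le_add_of_lowerLeft_eq_zero i (d - 1 - i) hvanish
    have hge := hmin X hX Y hY hne
    omega
  refine ⟨hinj, ?_⟩
  have hcard := card_le_pow_of_injOn C _ hinj
  rw [hq, Fintype.card_subtype] at hcard
  convert hcard using 3
  ext p
  simp

/-- Puncturing a generalized Ferrers diagram rank metric code: fix `0 ≤ i ≤ d - 1` and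
let `v_i` be the number of dots of the Ferrers diagram `F` outside the first `i` rows
and outside the rightmost `d - 1 - i` columns.  If `C` is a set of `a × b` matrices
supported on `F` with pairwise rank distance at least `d`, then restriction to those
`v_i` positions is injective on `C`, and consequently `|C| ≤ q^(v_i)`. -/
theorem ferrers_diagram_puncturing
    (q a b d i : ℕ) (K : Type*) [Field K] [Fintype K] [DecidableEq K]
    (hq : Fintype.card K = q)
    (hd : 1 ≤ d) (hi : i ≤ d - 1)
    (F : Finset (Fin a × Fin b))
    (hFright : ∀ p ∈ F, ∀ c' : Fin b, p.2 ≤ c' → (p.1, c') ∈ F)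
    (hFup : ∀ p ∈ F, ∀ r' : Fin a, r' ≤ p.1 → (r', p.2) ∈ F)
    (C : Finset (Matrix (Fin a) (Fin b) K))
    (hsupp : ∀ X ∈ C, ∀ (r : Fin a) (c : Fin b), (r, c) ∉ F → X r c = 0)
    (hmin : ∀ X ∈ C, ∀ Y ∈ C, X ≠ Y → d ≤ (X - Y).rank) :
    Set.InjOn (fun X : Matrix (Fin a) (Fin b) K =>
        fun p : {p : Fin a × Fin b //
            p ∈ F ∧ i ≤ (p.1 : ℕ) ∧ (p.2 : ℕ) < b - (d - 1 - i)} => X p.1.1 p.1.2)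
      (C : Set (Matrix (Fin a) (Fin b) K))
    ∧ C.card ≤
        q ^ (F.filter (fun p => i ≤ (p.1 : ℕ) ∧ (p.2 : ℕ) < b - (d - 1 - i))).card :=
  ferrers_diagram_puncturing_general q a b d i K hq hd hi F C hsupp hmin
end

section
/- In the proof of the Ferrers diagram Singleton bound, if X and Y are a×b matrices over 𝔽_q that agree at every position (r,c) with r > i and c ≤ b−j (where 0 ≤ i ≤ a and 0 ≤ j ≤ b), then the rank distance rank(X−Y) is at most i + j; in particular, a code of a×b matrices with minimum rank distance at least i + j + 1 contains no two distinct codewords agreeing at all such positions. -/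
open Module

lemma matrix_rank_add_le' {a b : ℕ} {K : Type*} [Field K]
    (A B : Matrix (Fin a) (Fin b) K) : (A + B).rank ≤ A.rank + B.rank := by
  rw [Matrix.rank, Matrix.rank, Matrix.rank, Matrix.mulVecLin_add]
  have hsub : LinearMap.range (A.mulVecLin + B.mulVecLin) ≤
      LinearMap.range A.mulVecLin ⊔ LinearMap.range B.mulVecLin := by
    rintro x ⟨v, rfl⟩
    exact Submodule.add_mem_sup ⟨v, rfl⟩ ⟨v, rfl⟩
  calc finrank K (LinearMap.range (A.mulVecLin + B.mulVecLin))
      ≤ finrank K ↑(LinearMap.range A.mulVecLin ⊔ LinearMap.range B.mulVecLin) :=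
        Submodule.finrank_mono hsub
    _ ≤ finrank K (LinearMap.range A.mulVecLin) + finrank K (LinearMap.range B.mulVecLin) :=
        Submodule.finrank_add_le_finrank_add_finrank _ _

/-- If two `a × b` matrices `X`, `Y` over `𝔽_q` agree at every position outside the
first `i` rows and outside the last `j` columns, then `rank (X - Y) ≤ i + j`; in
particular, a code with minimum rank distance at least `i + j + 1` contains no two
distinct codewords agreeing at all such positions. -/
theorem rank_distance_le_of_agree_outside_block
    (a b i j : ℕ) (K : Type*) [Field K] [Fintype K] [DecidableEq K]
    (hi : i ≤ a) (hj : j ≤ b)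
    (X Y : Matrix (Fin a) (Fin b) K)
    (hagree : ∀ (r : Fin a) (c : Fin b), i ≤ (r : ℕ) → (c : ℕ) < b - j → X r c = Y r c) :
    (X - Y).rank ≤ i + j ∧
      ∀ C : Set (Matrix (Fin a) (Fin b) K),
        (∀ A ∈ C, ∀ B ∈ C, A ≠ B → i + j + 1 ≤ (A - B).rank) →
        X ∈ C → Y ∈ C → X = Y := by
  set Z := X - Y with hZdef
  have hZ0 : ∀ (r : Fin a) (c : Fin b), i ≤ (r : ℕ) → (c : ℕ) < b - j → Z r c = 0 := by
    intro r c hr hc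
    simp [hZdef, Matrix.sub_apply, sub_eq_zero, hagree r c hr hc]
  have hrank : Z.rank ≤ i + j := by
    set A : Matrix (Fin a) (Fin i) K := fun r k => if (r : ℕ) = (k : ℕ) then 1 else 0 with hA
    set B : Matrix (Fin i) (Fin b) K := fun k c => Z ⟨k, lt_of_lt_of_le k.2 hi⟩ c with hB
    set P : Matrix (Fin a) (Fin j) K := fun r k =>
      if i ≤ (r : ℕ) then Z r ⟨b - j + k, by omega⟩ else 0 with hP
    set Q : Matrix (Fin j) (Fin b) K := fun k c => if (c : ℕ) = b - j + (k : ℕ) then 1 else 0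
      with hQ
    have hsum : Z = A * B + P * Q := by
      ext r c
      simp only [Matrix.add_apply, Matrix.mul_apply]
      by_cases hr : (r : ℕ) < i
      · have h1 : ∑ k : Fin i, A r k * B k c = Z r c := by
          rw [Finset.sum_eq_single (⟨(r : ℕ), hr⟩ : Fin i)]
          · simp [hA, hB]
          · intro k _ hk
            have : (r : ℕ) ≠ (k : ℕ) := fun h => hk (Fin.ext (by simpa using h.symm))
            simp [hA, this]
          · simp
        have h2 : ∑ k : Fin j, P r k * Q k c = 0 := by
          apply Finset.sum_eq_zero
          intro k _
          simp [hP, not_le.mpr hr]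
        rw [h1, h2, add_zero]
      · push_neg at hr
        have h1 : ∑ k : Fin i, A r k * B k c = 0 := by
          apply Finset.sum_eq_zero
          intro k _
          have : (r : ℕ) ≠ (k : ℕ) := by have := k.2; omega
          simp [hA, this]
        rw [h1, zero_add]
        by_cases hc : b - j ≤ (c : ℕ)
        · have hc' : (c : ℕ) - (b - j) < j := by have := c.2; omega
          rw [Finset.sum_eq_single (⟨(c : ℕ) - (b - j), hc'⟩ : Fin j)]
          · have hcc : (c : ℕ) = b - j + ((c : ℕ) - (b - j)) := by omega
            have hfin : (⟨b - j + ((c : ℕ) - (b - j)), by omega⟩ : Fin b) = c :=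
              Fin.ext (by simp; omega)
            simp [hP, hQ, hr, hfin, ← hcc]
          · intro k _ hk
            have : (c : ℕ) ≠ b - j + (k : ℕ) := by
              intro h
              apply hk
              ext
              simp
              omega
            simp [hQ, this]
          · simp
        · push_neg at hc
          have h2 : ∑ k : Fin j, P r k * Q k c = 0 := by
            apply Finset.sum_eq_zero
            intro k _
            have : (c : ℕ) ≠ b - j + (k : ℕ) := by omega
            simp [hQ, this]
          rw [h2, hZ0 r c hr hc]
    calc Z.rank = (A * B + P * Q).rank := by rw [← hsum]
      _ ≤ (A * B).rank + (P * Q).rank := matrix_rank_add_le' _ _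
      _ ≤ B.rank + Q.rank := add_le_add (Matrix.rank_mul_le_right _ _)
          (Matrix.rank_mul_le_right _ _)
      _ ≤ i + j := by
          have h1 : B.rank ≤ i := (Matrix.rank_le_card_height B).trans (by simp)
          have h2 : Q.rank ≤ j := (Matrix.rank_le_card_height Q).trans (by simp)
          omega
  refine ⟨hrank, fun C hC hX hY => ?_⟩
  by_contra hne
  have := hC X hX Y hY hne
  rw [← hZdef] at this
  omega
end
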